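/- Let N ≥ 3 be a natural number. If the tail ∑_{k=N+1}^∞ 1/(k · log k · (log log k)²) is less than 0.1, then N + 1 > e^{e^{10}}. -/

import Mathlib

/-!
The summand `f x = 1 / (x log x (log log x)²)` is the derivative of `F x = -(log log x)⁻¹` and
decreases on `(e, ∞)`, so by the mean value theorem `f k ≥ F (k + 1) - F k`. These increments
telescope, and since `F → 0` the tail from `N + 1` on is at least `(log log (N + 1))⁻¹`; a tail
below `1/10` therefore forces `log log (N + 1) > 10`.
-/

open Real Filter Set Topology

theorem hasSum_succ_sub_of_monotone {u : ℕ → ℝ} {l : ℝ} (hu : Monotone u)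
    (hl : Tendsto u atTop (𝓝 l)) : HasSum (fun n ↦ u (n + 1) - u n) (l - u 0) := by
  rw [hasSum_iff_tendsto_nat_of_nonneg (fun n ↦ sub_nonneg.2 (hu n.le_succ))]
  simp only [Finset.sum_range_sub]
  exact hl.sub_const _

theorem AntitoneOn.apply_add_one_le_sub_le_of_hasDerivAt {f F : ℝ → ℝ} {x : ℝ}
    (hf : AntitoneOn f (Icc x (x + 1))) (hF : ∀ y ∈ Icc x (x + 1), HasDerivAt F (f y) y) :
    f (x + 1) ≤ F (x + 1) - F x ∧ F (x + 1) - F x ≤ f x := by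
  obtain ⟨c, hc, hslope⟩ := exists_hasDerivAt_eq_slope F f (lt_add_one x)
    (fun y hy ↦ (hF y hy).continuousAt.continuousWithinAt) (fun y hy ↦ hF y (Ioo_subset_Icc_self hy))
  rw [add_sub_cancel_left, div_one] at hslope
  have hc' : c ∈ Icc x (x + 1) := Ioo_subset_Icc_self hc
  rw [← hslope]
  exact ⟨hf hc' (right_mem_Icc.2 (by linarith)) hc.2.le,
    hf (left_mem_Icc.2 (by linarith)) hc' hc.1.le⟩

theorem add_natCast_mem_Ici (a : ℝ) (k : ℕ) : a + k ∈ Ici a :=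
  mem_Ici.2 (le_add_of_nonneg_right k.cast_nonneg)

theorem AntitoneOn.apply_nat_add_one_le_sub_le_of_hasDerivAt {f F : ℝ → ℝ} {a : ℝ}
    (hf : AntitoneOn f (Ici a)) (hF : ∀ x ∈ Ici a, HasDerivAt F (f x) x) (k : ℕ) :
    f (a + (k + 1 : ℕ)) ≤ F (a + (k + 1 : ℕ)) - F (a + k) ∧
      F (a + (k + 1 : ℕ)) - F (a + k) ≤ f (a + k) := by
  have hsub : Icc (a + k) (a + k + 1) ⊆ Ici a :=
    Icc_subset_Ici_self.trans (Ici_subset_Ici.2 (add_natCast_mem_Ici a k))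
  rw [Nat.cast_succ, ← add_assoc]
  exact (hf.mono hsub).apply_add_one_le_sub_le_of_hasDerivAt fun y hy ↦ hF y (hsub hy)

theorem AntitoneOn.hasSum_nat_sub_of_hasDerivAt {f F : ℝ → ℝ} {a L : ℝ}
    (hf : AntitoneOn f (Ici a)) (hf₀ : ∀ x ∈ Ici a, 0 ≤ f x)
    (hF : ∀ x ∈ Ici a, HasDerivAt F (f x) x) (hL : Tendsto F atTop (𝓝 L)) :
    HasSum (fun k : ℕ ↦ F (a + (k + 1 : ℕ)) - F (a + k)) (L - F a) := by
  have hmono : Monotone fun k : ℕ ↦ F (a + k) := monotone_nat_of_le_succ fun k ↦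
    sub_nonneg.1 <| (hf₀ _ (add_natCast_mem_Ici a (k + 1))).trans
      (hf.apply_nat_add_one_le_sub_le_of_hasDerivAt hF k).1
  have hlim : Tendsto (fun k : ℕ ↦ F (a + k)) atTop (𝓝 L) :=
    hL.comp (tendsto_atTop_add_const_left _ a tendsto_natCast_atTop_atTop)
  simpa using hasSum_succ_sub_of_monotone hmono hlim

theorem AntitoneOn.summable_nat_of_hasDerivAt {f F : ℝ → ℝ} {a L : ℝ}
    (hf : AntitoneOn f (Ici a)) (hf₀ : ∀ x ∈ Ici a, 0 ≤ f x)
    (hF : ∀ x ∈ Ici a, HasDerivAt F (f x) x) (hL : Tendsto F atTop (𝓝 L)) :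
    Summable fun k : ℕ ↦ f (a + k) :=
  (summable_nat_add_iff 1).1 <|
    (hf.hasSum_nat_sub_of_hasDerivAt hf₀ hF hL).summable.of_nonneg_of_le
      (fun k ↦ hf₀ _ (add_natCast_mem_Ici a (k + 1)))
      fun k ↦ (hf.apply_nat_add_one_le_sub_le_of_hasDerivAt hF k).1

theorem AntitoneOn.sub_le_tsum_nat_of_hasDerivAt {f F : ℝ → ℝ} {a L : ℝ}
    (hf : AntitoneOn f (Ici a)) (hf₀ : ∀ x ∈ Ici a, 0 ≤ f x)
    (hF : ∀ x ∈ Ici a, HasDerivAt F (f x) x) (hL : Tendsto F atTop (𝓝 L)) :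
    L - F a ≤ ∑' k : ℕ, f (a + k) :=
  hasSum_le (fun k ↦ (hf.apply_nat_add_one_le_sub_le_of_hasDerivAt hF k).2)
    (hf.hasSum_nat_sub_of_hasDerivAt hf₀ hF hL)
    (hf.summable_nat_of_hasDerivAt hf₀ hF hL).hasSum

theorem one_lt_log_of_exp_one_lt {x : ℝ} (hx : exp 1 < x) : 1 < log x :=
  (lt_log_iff_exp_lt ((exp_pos 1).trans hx)).2 hx

theorem mul_log_mul_log_log_sq_pos {x : ℝ} (hx : exp 1 < x) :
    0 < x * log x * log (log x) ^ 2 := by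
  have hx₀ : 0 < x := (exp_pos 1).trans hx
  have hlog : 1 < log x := one_lt_log_of_exp_one_lt hx
  have := log_pos hlog
  have : 0 < log x := one_pos.trans hlog
  positivity

theorem antitoneOn_one_div_mul_log_mul_log_log_sq :
    AntitoneOn (fun x ↦ 1 / (x * log x * log (log x) ^ 2)) (Ioi (exp 1)) := by
  intro x hx y hy hxy
  have hx₀ : 0 < x := (exp_pos 1).trans hx
  have hy₀ : 0 < y := hx₀.trans_le hxy
  have hlogx : 1 < log x := one_lt_log_of_exp_one_lt hx
  have hlogy : 1 < log y := one_lt_log_of_exp_one_lt hy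
  have := log_pos hlogx
  dsimp only
  gcongr

theorem hasDerivAt_neg_inv_log_log {x : ℝ} (hx : exp 1 < x) :
    HasDerivAt (fun y ↦ -(log (log y))⁻¹) (1 / (x * log x * log (log x) ^ 2)) x := by
  have hx₀ : 0 < x := (exp_pos 1).trans hx
  have hlog : 1 < log x := one_lt_log_of_exp_one_lt hx
  have hloglog : HasDerivAt (fun y ↦ log (log y)) ((log x)⁻¹ * x⁻¹) x :=
    (hasDerivAt_log (by linarith)).comp x (hasDerivAt_log hx₀.ne')
  refine (hloglog.inv (log_pos hlog).ne').neg.congr_deriv ?_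
  field_simp

theorem tendsto_neg_inv_log_log_atTop : Tendsto (fun x ↦ -(log (log x))⁻¹) atTop (𝓝 0) := by
  simpa using (tendsto_log_atTop.comp tendsto_log_atTop).inv_tendsto_atTop.neg

theorem inv_log_log_le_tsum {a : ℝ} (ha : exp 1 < a) :
    (log (log a))⁻¹ ≤ ∑' k : ℕ, 1 / ((a + k) * log (a + k) * log (log (a + k)) ^ 2) := by
  have hIci : Ici a ⊆ Ioi (exp 1) := Ici_subset_Ioi.2 ha
  simpa using (antitoneOn_one_div_mul_log_mul_log_log_sq.mono hIci).sub_le_tsum_nat_of_hasDerivAt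
    (fun x hx ↦ (one_div_pos.2 (mul_log_mul_log_log_sq_pos (hIci hx))).le)
    (fun x hx ↦ hasDerivAt_neg_inv_log_log (hIci hx)) tendsto_neg_inv_log_log_atTop

/-- If the tail `∑_{k=N+1}^∞ 1/(k log k (log log k)²)` is less than `0.1`,
then `N + 1 > e^(e^10)`. -/
theorem tail_small_implies_huge (N : ℕ) (hN : 3 ≤ N)
    (h : (∑' k : ℕ, 1 / (((N : ℝ) + 1 + k) * Real.log ((N : ℝ) + 1 + k) *
        (Real.log (Real.log ((N : ℝ) + 1 + k))) ^ 2)) < 0.1) :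
    Real.exp (Real.exp 10) < (N : ℝ) + 1 := by
  have he : exp 1 < (N : ℝ) + 1 := by
    have : (3 : ℝ) ≤ N := by exact_mod_cast hN
    linarith [exp_one_lt_d9]
  have hlog : 0 < log ((N : ℝ) + 1) := one_pos.trans (one_lt_log_of_exp_one_lt he)
  have hloglog : 0 < log (log ((N : ℝ) + 1)) := log_pos (one_lt_log_of_exp_one_lt he)
  have hinv : (log (log ((N : ℝ) + 1)))⁻¹ < 10⁻¹ := by
    linarith [inv_log_log_le_tsum he]
  rw [← lt_log_iff_exp_lt (by linarith), ← lt_log_iff_exp_lt hlog]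
  exact (inv_lt_inv₀ hloglog (by norm_num)).1 hinv
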